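/- arXiv:2604.04985 — 3 statements merged into one kernel-verified Lean document; each statement's English description precedes it below -/
import Mathlib

section
/- For every n ≥ 3, the graphs S(C_n), R(C_n) and Q(C_n) obtained from the cycle C_n on n vertices are dispersable: mbt(S(C_n)) = Δ(S(C_n)) = 2, mbt(R(C_n)) = Δ(R(C_n)) = 4, and mbt(Q(C_n)) = Δ(Q(C_n)) = 4. -/
open SimpleGraph

/-- Degree of a vertex. -/
noncomputable def deg {V : Type*} (G : SimpleGraph V) (v : V) : ℕ :=
  (G.neighborSet v).ncard

/-- Maximum degree Δ(G) of a finite simple graph. -/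
noncomputable def maxDeg {V : Type*} [Fintype V] (G : SimpleGraph V) : ℕ :=
  Finset.univ.sup (deg G)

/-- `IsMBE G k f page` : the linear order on vertices given by the injection `f : V → ℕ`
together with the page assignment `page` is a matching book embedding of `G` on `k` pages:
every edge gets a page `< k`, no two edges on a common page cross, and every vertex is
incident to at most one edge on each page. -/
def IsMBE {V : Type*} (G : SimpleGraph V) (k : ℕ) (f : V → ℕ) (page : Sym2 V → ℕ) : Prop :=
  Function.Injective f ∧
  (∀ u v, G.Adj u v → page s(u, v) < k) ∧
  (∀ u v x y, G.Adj u v → G.Adj x y → page s(u, v) = page s(x, y) →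
    ¬(f u < f x ∧ f x < f v ∧ f v < f y)) ∧
  (∀ u v w, G.Adj u v → G.Adj u w → v ≠ w → page s(u, v) ≠ page s(u, w))

/-- The matching book thickness of `G`: the least number of pages admitting a
matching book embedding. -/
noncomputable def mbt {V : Type*} (G : SimpleGraph V) : ℕ :=
  sInf {k | ∃ f page, IsMBE G k f page}

/-- A graph is outerplanar iff it has a one-page book embedding: a linear order of
its vertices (an injection into `ℕ`) in which no two edges cross. -/
def IsOuterplanar {V : Type*} (G : SimpleGraph V) : Prop :=
  ∃ f : V → ℕ, Function.Injective f ∧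
    ∀ u v x y, G.Adj u v → G.Adj x y → ¬(f u < f x ∧ f x < f v ∧ f v < f y)

/-- The derived graph of `G` on vertex set `V(G) ⊕ E(G)`. Black–white edges
(`u`–`(uv)` for `u` an endpoint of the edge `uv`) are always present; `black` indicates
whether the original edges of `G` are retained, and `white` indicates whether two edge
vertices corresponding to adjacent edges of `G` (distinct edges sharing an endpoint)
are joined. -/
def derivedG {V : Type*} (G : SimpleGraph V) (black white : Bool) :
    SimpleGraph (V ⊕ G.edgeSet) where
  Adj x y :=
    match x, y with
    | Sum.inl u, Sum.inl v => black = true ∧ G.Adj u v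
    | Sum.inl u, Sum.inr e => u ∈ (e : Sym2 V)
    | Sum.inr e, Sum.inl u => u ∈ (e : Sym2 V)
    | Sum.inr e, Sum.inr f =>
        white = true ∧ e ≠ f ∧ ∃ w, w ∈ (e : Sym2 V) ∧ w ∈ (f : Sym2 V)
  symm := by
    constructor
    rintro (u | e) (v | f) h
    · exact ⟨h.1, h.2.symm⟩
    · exact h
    · exact h
    · obtain ⟨hw, hne, w, h1, h2⟩ := h
      exact ⟨hw, hne.symm, w, h2, h1⟩
  loopless := by
    constructor
    rintro (u | e) h
    · exact G.loopless.irrefl u h.2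
    · exact h.2.1 rfl

/-- The four graph operations `S`, `R`, `Q`, `T`. -/
inductive FOp : Type
  | S | R | Q | T
  deriving DecidableEq

/-- Whether the operation retains the original (black–black) edges of `G`. -/
def FOp.black : FOp → Bool
  | .R => true
  | .T => true
  | _ => false

/-- Whether the operation joins edge (white) vertices of adjacent edges. -/
def FOp.white : FOp → Bool
  | .Q => true
  | .T => true
  | _ => false

/-- `FGraph F G` is the graph `F(G)` for `F ∈ {S, R, Q, T}`. -/
def FGraph (F : FOp) {V : Type*} (G : SimpleGraph V) : SimpleGraph (V ⊕ G.edgeSet) :=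
  derivedG G F.black F.white

/-- The `F`-sum `G +_F H`: vertex set `(V(G) ∪ E(G)) × V(H)`; `(u₁, u₂)` and `(v₁, v₂)`
are adjacent iff `u₁ = v₁ ∈ V(G)` and `u₂v₂ ∈ E(H)`, or `u₂ = v₂` and
`u₁v₁ ∈ E(F(G))`. -/
def FSum (F : FOp) {V W : Type*} (G : SimpleGraph V) (H : SimpleGraph W) :
    SimpleGraph ((V ⊕ G.edgeSet) × W) where
  Adj x y :=
    (x.1 = y.1 ∧ (∃ u : V, x.1 = Sum.inl u) ∧ H.Adj x.2 y.2) ∨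
    (x.2 = y.2 ∧ (FGraph F G).Adj x.1 y.1)
  symm := by
    constructor
    rintro ⟨a, b⟩ ⟨c, d⟩ (⟨h1, h2, h3⟩ | ⟨h1, h2⟩)
    · exact Or.inl ⟨h1.symm, h1 ▸ h2, h3.symm⟩
    · exact Or.inr ⟨h1.symm, h2.symm⟩
  loopless := by
    constructor
    rintro ⟨a, b⟩ (⟨-, -, h⟩ | ⟨-, h⟩)
    · exact H.loopless.irrefl b h
    · exact (FGraph F G).loopless.irrefl a h

/-- The path graph `P_n` on `n` vertices. -/
def pathG (n : ℕ) : SimpleGraph (Fin n) where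
  Adj i j := (i : ℕ) + 1 = (j : ℕ) ∨ (j : ℕ) + 1 = (i : ℕ)
  symm := by constructor; intro i j h; tauto
  loopless := by constructor; intro i h; omega

instance (n : ℕ) : DecidableRel (pathG n).Adj := fun i j =>
  inferInstanceAs (Decidable (_ ∨ _))

/-- The cycle graph `C_n` on `n` vertices (intended for `n ≥ 3`). -/
def cycleG (n : ℕ) : SimpleGraph (Fin n) where
  Adj i j := i ≠ j ∧ (((i : ℕ) + 1) % n = (j : ℕ) ∨ ((j : ℕ) + 1) % n = (i : ℕ))
  symm := by constructor; intro i j h; tauto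
  loopless := by constructor; intro i h; exact h.1 rfl

instance (n : ℕ) : DecidableRel (cycleG n).Adj := fun i j =>
  inferInstanceAs (Decidable (_ ∧ _))

/-- The star graph `S_n = K_{1,n}` on `n + 1` vertices: vertex `0` is the center. -/
def starG (n : ℕ) : SimpleGraph (Fin (n + 1)) where
  Adj i j := i ≠ j ∧ (i = 0 ∨ j = 0)
  symm := by constructor; intro i j h; tauto
  loopless := by constructor; intro i h; exact h.1 rfl

instance (n : ℕ) : DecidableRel (starG n).Adj := fun i j =>
  inferInstanceAs (Decidable (_ ∧ _))

/-- The circulant graph `C(ℤ_m, {1, 2})`: vertices `0, …, m - 1`, with `i` adjacent to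
`j` iff `i - j ≡ ±1` or `±2 (mod m)`. -/
def circulantG12 (m : ℕ) : SimpleGraph (Fin m) where
  Adj i j := i ≠ j ∧
    (((i : ℕ) + 1) % m = (j : ℕ) ∨ ((i : ℕ) + 2) % m = (j : ℕ) ∨
     ((j : ℕ) + 1) % m = (i : ℕ) ∨ ((j : ℕ) + 2) % m = (i : ℕ))
  symm := by constructor; intro i j h; tauto
  loopless := by constructor; intro i h; exact h.1 rfl


/-!
Place the vertex `i` of `C_n` at position `2i` of the spine and its edge `{i, i+1}` at
position `2i + 1`. Then `S(C_n)` is drawn as the cycle `0, 1, …, 2n - 1`, and `R(C_n)` resp.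
`Q(C_n)` as that cycle together with the cycle through the even resp. odd positions. None of
these drawings has two crossing edges, so a matching book embedding only needs a proper
edge colouring of them with `2` resp. `4` colours, which is written down explicitly.
Conversely, the edges at a vertex lie on pairwise distinct pages, so `Δ(G) ≤ mbt(G)` for
every graph that has a matching book embedding at all, and vertices of degree `2` resp. `4`
give equality.
-/

section MatchingBook

variable {V W : Type*} {G : SimpleGraph V} {k : ℕ} {f : V → ℕ} {page : Sym2 V → ℕ}

namespace IsMBE

theorem deg_le (h : IsMBE G k f page) (v : V) : deg G v ≤ k := by
  obtain ⟨-, hlt, -, hmatch⟩ := h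
  have hinj : Set.InjOn (fun u => page s(v, u)) (G.neighborSet v) := fun a ha b hb hab => by
    by_contra hne
    exact hmatch v a b ha hb hne hab
  calc deg G v ≤ (Set.Iio k).ncard :=
        Set.ncard_le_ncard_of_injOn _ (fun u hu => hlt v u hu) hinj (Set.finite_Iio k)
    _ = k := Set.ncard_Iio_nat k

theorem mbt_le (h : IsMBE G k f page) : mbt G ≤ k :=
  Nat.sInf_le ⟨f, page, h⟩

theorem maxDeg_le_mbt [Fintype V] (h : IsMBE G k f page) : maxDeg G ≤ mbt G :=
  le_csInf ⟨k, f, page, h⟩ fun _ ⟨_, _, h'⟩ => Finset.sup_le fun v _ => h'.deg_le v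

theorem mbt_eq_maxDeg [Fintype V] (h : IsMBE G k f page) {v : V} (hv : k ≤ deg G v) :
    mbt G = maxDeg G ∧ maxDeg G = k := by
  have hdeg : deg G v ≤ maxDeg G := Finset.le_sup (Finset.mem_univ v)
  have := h.maxDeg_le_mbt
  have := h.mbt_le
  omega

theorem comap {H : SimpleGraph W} {f : W → ℕ} {page : Sym2 W → ℕ} (h : IsMBE H k f page)
    (φ : G →g H) (hφ : Function.Injective φ) :
    IsMBE G k (f ∘ φ) (page ∘ Sym2.map φ) := by
  obtain ⟨hf, hlt, hcross, hmatch⟩ := h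
  exact ⟨hf.comp hφ, fun u v huv => hlt _ _ (φ.map_adj huv),
    fun u v x y huv hxy => hcross _ _ _ _ (φ.map_adj huv) (φ.map_adj hxy),
    fun u v w huv huw hvw => hmatch _ _ _ (φ.map_adj huv) (φ.map_adj huw) (hφ.ne hvw)⟩

end IsMBE

theorem length_le_deg_of_nodup [Finite V] {v : V} {l : List V} (hl : l.Nodup)
    (hadj : ∀ u ∈ l, G.Adj v u) : l.length ≤ deg G v := by
  classical
  rw [← List.toFinset_card_of_nodup hl, ← Set.ncard_coe_finset]
  exact Set.ncard_le_ncard (fun u hu => hadj u (List.mem_toFinset.mp hu)) (Set.toFinite _)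

end MatchingBook

def evenCycle (n : ℕ) : SimpleGraph ℕ :=
  fromRel fun a b => b = a + 1 ∧ b < 2 * n ∨ a = 0 ∧ b = 2 * n - 1

def chordedCycle (n p : ℕ) : SimpleGraph ℕ :=
  evenCycle n ⊔
    fromRel fun a b => a % 2 = p ∧ b = a + 2 ∧ b < 2 * n ∨ a = p ∧ b = 2 * n - 2 + p

def evenCyclePage (n : ℕ) : Sym2 ℕ → ℕ :=
  Sym2.lift ⟨fun a b => if min a b = 0 ∧ max a b = 2 * n - 1 then 1 else min a b % 2,
    fun a b => by dsimp only; rw [min_comm, max_comm]⟩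

/-- Spine edges alternate between pages `0` and `1` and chords between pages `2` and `3`; the
spine edges at both ends move to a chord page, making room for the two long edges. -/
def chordedCyclePage (n : ℕ) : Sym2 ℕ → ℕ :=
  Sym2.lift ⟨fun a b =>
    if max a b = min a b + 1 then
      (if min a b = 0 then 3 else if min a b = 2 * n - 2 then 3 - n % 2 else min a b % 2)
    else if max a b = min a b + 2 then 2 + min a b / 2 % 2
    else if min a b = 0 ∧ max a b = 2 * n - 1 then 1 else 0,
    fun a b => by dsimp only; rw [min_comm, max_comm]⟩

theorem isMBE_evenCycle (n : ℕ) : IsMBE (evenCycle n) 2 id (evenCyclePage n) := by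
  refine ⟨Function.injective_id, fun a b _ => ?_, fun a b c d hab hcd _ => ?_,
    fun a b c hab hac hbc => ?_⟩
  · simp only [evenCyclePage, Sym2.lift_mk]; split_ifs <;> omega
  · simp only [evenCycle, fromRel_adj, id] at hab hcd ⊢; omega
  · simp only [evenCycle, fromRel_adj, evenCyclePage, Sym2.lift_mk] at hab hac ⊢
    split_ifs <;> omega

theorem isMBE_chordedCycle (n : ℕ) {p : ℕ} (hp : p < 2) :
    IsMBE (chordedCycle n p) 4 id (chordedCyclePage n) := by
  refine ⟨Function.injective_id, fun a b _ => ?_, fun a b c d hab hcd _ => ?_,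
    fun a b c hab hac hbc => ?_⟩
  · simp only [chordedCyclePage, Sym2.lift_mk]; split_ifs <;> omega
  · simp only [chordedCycle, evenCycle, sup_adj, fromRel_adj, id] at hab hcd ⊢; omega
  · simp only [chordedCycle, evenCycle, sup_adj, fromRel_adj, chordedCyclePage,
      Sym2.lift_mk] at hab hac ⊢
    split_ifs <;> omega

section Cycle

variable {n : ℕ}

def cycleSucc (i : Fin n) : Fin n := ⟨((i : ℕ) + 1) % n, Nat.mod_lt _ i.pos⟩

theorem val_cycleSucc (i : Fin n) :
    (cycleSucc i : ℕ) = if (i : ℕ) + 1 = n then 0 else (i : ℕ) + 1 := by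
  have := i.isLt
  split_ifs with h
  · simp [cycleSucc, h]
  · exact Nat.mod_eq_of_lt (by omega)

theorem val_cycleSucc_of_lt {i : Fin n} (h : (i : ℕ) + 1 < n) : (cycleSucc i : ℕ) = i + 1 :=
  Nat.mod_eq_of_lt h

theorem cycleG_adj_iff {i j : Fin n} :
    (cycleG n).Adj i j ↔ i ≠ j ∧ (cycleSucc i = j ∨ cycleSucc j = i) := by
  simp only [cycleG, cycleSucc, Fin.ext_iff]

theorem cycleG_adj_cycleSucc (hn : 2 ≤ n) (i : Fin n) : (cycleG n).Adj i (cycleSucc i) := by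
  have := val_cycleSucc i
  refine cycleG_adj_iff.mpr ⟨fun h => ?_, Or.inl rfl⟩
  rw [← h] at this
  split_ifs at this <;> omega

theorem exists_eq_edge (e : (cycleG n).edgeSet) :
    ∃ i, s(i, cycleSucc i) = (e : Sym2 (Fin n)) := by
  obtain ⟨e, he⟩ := e
  induction e using Sym2.inductionOn with
  | hf a b =>
    obtain ⟨-, h | h⟩ := cycleG_adj_iff.mp he
    · exact ⟨a, congrArg (s(a, ·)) h⟩
    · exact ⟨b, (congrArg (s(b, ·)) h).trans Sym2.eq_swap⟩

noncomputable def edgeStart (e : (cycleG n).edgeSet) : Fin n :=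
  (exists_eq_edge e).choose

theorem mk_edgeStart (e : (cycleG n).edgeSet) :
    s(edgeStart e, cycleSucc (edgeStart e)) = (e : Sym2 (Fin n)) :=
  (exists_eq_edge e).choose_spec

theorem edgeStart_injective : Function.Injective (edgeStart (n := n)) := fun e f h =>
  Subtype.ext <| by rw [← mk_edgeStart e, ← mk_edgeStart f, h]

theorem mem_edge_iff {e : (cycleG n).edgeSet} {i : Fin n} :
    i ∈ (e : Sym2 (Fin n)) ↔ i = edgeStart e ∨ i = cycleSucc (edgeStart e) := by
  rw [← mk_edgeStart e, Sym2.mem_iff]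

def cycleEdge (hn : 3 ≤ n) (i : Fin n) : (cycleG n).edgeSet :=
  ⟨s(i, cycleSucc i), cycleG_adj_cycleSucc (by omega) i⟩

theorem edgeStart_cycleEdge (hn : 3 ≤ n) (i : Fin n) : edgeStart (cycleEdge hn i) = i := by
  rcases Sym2.eq_iff.mp (mk_edgeStart (cycleEdge hn i)) with ⟨hi, -⟩ | ⟨hi, hj⟩
  · exact hi
  · have := val_cycleSucc i
    have := val_cycleSucc (edgeStart (cycleEdge hn i))
    rw [Fin.ext_iff] at hi hj
    split_ifs at * <;> omega

theorem cycleEdge_injective (hn : 3 ≤ n) : Function.Injective (cycleEdge hn) := fun i j h => by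
  simpa only [edgeStart_cycleEdge] using congrArg edgeStart h

noncomputable def cyclePos : Fin n ⊕ (cycleG n).edgeSet → ℕ
  | .inl i => 2 * i
  | .inr e => 2 * edgeStart e + 1

theorem cyclePos_injective : Function.Injective (cyclePos (n := n)) := by
  rintro (i | e) (j | f) h <;> simp only [cyclePos] at h
  · exact congrArg Sum.inl (Fin.ext (by omega))
  · omega
  · omega
  · exact congrArg Sum.inr (edgeStart_injective (Fin.ext (by omega)))

theorem evenCycle_adj_cyclePos_of_mem {i : Fin n} {e : (cycleG n).edgeSet}
    (h : i ∈ (e : Sym2 (Fin n))) : (evenCycle n).Adj (cyclePos (.inl i)) (cyclePos (.inr e)) := by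
  have := (edgeStart e).isLt
  have hs := val_cycleSucc (edgeStart e)
  rcases mem_edge_iff.mp h with rfl | rfl <;> simp only [evenCycle, fromRel_adj, cyclePos, true_and]
  · omega
  · split_ifs at hs <;> omega

theorem chordedCycle_adj_cyclePos_of_adj {i j : Fin n} (h : (cycleG n).Adj i j) :
    (chordedCycle n 0).Adj (cyclePos (.inl i)) (cyclePos (.inl j)) := by
  obtain ⟨hij, h⟩ := cycleG_adj_iff.mp h
  have := Fin.val_ne_of_ne hij
  have := val_cycleSucc i
  have := val_cycleSucc j
  simp only [chordedCycle, evenCycle, sup_adj, fromRel_adj, cyclePos]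
  rcases h with rfl | rfl <;> split_ifs at * <;> omega

theorem chordedCycle_adj_cyclePos_of_mem_of_mem {e f : (cycleG n).edgeSet} {w : Fin n}
    (hef : e ≠ f) (he : w ∈ (e : Sym2 (Fin n))) (hf : w ∈ (f : Sym2 (Fin n))) :
    (chordedCycle n 1).Adj (cyclePos (.inr e)) (cyclePos (.inr f)) := by
  have hne : (edgeStart e : ℕ) ≠ edgeStart f := fun h => hef (edgeStart_injective (Fin.ext h))
  have := (edgeStart e).isLt
  have := (edgeStart f).isLt
  have hse := val_cycleSucc (edgeStart e)
  have hsf := val_cycleSucc (edgeStart f)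
  simp only [chordedCycle, evenCycle, sup_adj, fromRel_adj, cyclePos]
  rcases mem_edge_iff.mp he with rfl | rfl <;> rcases mem_edge_iff.mp hf with h | h <;>
    rw [Fin.ext_iff] at h <;> split_ifs at hse hsf <;> omega

noncomputable def cyclePosHomS : FGraph .S (cycleG n) →g evenCycle n where
  toFun := cyclePos
  map_rel' {x y} h := by
    rcases x with i | e <;> rcases y with j | f
    · exact absurd h.1 (by decide)
    · exact evenCycle_adj_cyclePos_of_mem h
    · exact (evenCycle_adj_cyclePos_of_mem h).symm
    · exact absurd h.1 (by decide)

noncomputable def cyclePosHomChorded (F : FOp) (p : ℕ) (hblack : F.black = true → p = 0)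
    (hwhite : F.white = true → p = 1) : FGraph F (cycleG n) →g chordedCycle n p where
  toFun := cyclePos
  map_rel' {x y} h := by
    rcases x with i | e <;> rcases y with j | f
    · obtain ⟨hb, hij⟩ := h
      exact hblack hb ▸ chordedCycle_adj_cyclePos_of_adj hij
    · exact Or.inl (evenCycle_adj_cyclePos_of_mem h)
    · exact Or.inl (evenCycle_adj_cyclePos_of_mem h).symm
    · obtain ⟨hw, hef, w, he, hf⟩ := h
      exact hwhite hw ▸ chordedCycle_adj_cyclePos_of_mem_of_mem hef he hf

theorem two_le_deg_S (hn : 3 ≤ n) :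
    2 ≤ deg (FGraph .S (cycleG n)) (.inl (cycleSucc ⟨0, by omega⟩)) := by
  set i₀ : Fin n := ⟨0, by omega⟩
  have h₁ : (cycleSucc i₀ : ℕ) = 1 := val_cycleSucc_of_lt (by simp only [i₀]; omega)
  refine length_le_deg_of_nodup
    (l := [.inr (cycleEdge hn i₀), .inr (cycleEdge hn (cycleSucc i₀))])
    (List.Nodup.of_map cyclePos ?_) ?_
  · simp only [List.map_cons, List.map_nil, cyclePos, edgeStart_cycleEdge, h₁, i₀]
    decide
  · simp only [List.mem_cons, List.mem_nil_iff, or_false, forall_eq_or_imp, forall_eq]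
    exact ⟨Sym2.mem_mk_right _ _, Sym2.mem_mk_left _ _⟩

theorem four_le_deg_R (hn : 3 ≤ n) :
    4 ≤ deg (FGraph .R (cycleG n)) (.inl (cycleSucc ⟨0, by omega⟩)) := by
  set i₀ : Fin n := ⟨0, by omega⟩
  have h₁ : (cycleSucc i₀ : ℕ) = 1 := val_cycleSucc_of_lt (by simp only [i₀]; omega)
  have h₂ : (cycleSucc (cycleSucc i₀) : ℕ) = 2 := by rw [val_cycleSucc_of_lt] <;> omega
  refine length_le_deg_of_nodup (l := [.inl i₀, .inl (cycleSucc (cycleSucc i₀)),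
    .inr (cycleEdge hn i₀), .inr (cycleEdge hn (cycleSucc i₀))])
    (List.Nodup.of_map cyclePos ?_) ?_
  · simp only [List.map_cons, List.map_nil, cyclePos, edgeStart_cycleEdge, h₁, h₂, i₀]
    decide
  · simp only [List.mem_cons, List.mem_nil_iff, or_false, forall_eq_or_imp, forall_eq]
    exact ⟨⟨rfl, (cycleG_adj_cycleSucc (by omega) i₀).symm⟩,
      ⟨rfl, cycleG_adj_cycleSucc (by omega) _⟩, Sym2.mem_mk_right _ _, Sym2.mem_mk_left _ _⟩

theorem four_le_deg_Q (hn : 3 ≤ n) :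
    4 ≤ deg (FGraph .Q (cycleG n)) (.inr (cycleEdge hn (cycleSucc ⟨0, by omega⟩))) := by
  set i₀ : Fin n := ⟨0, by omega⟩
  set i₁ := cycleSucc i₀
  set i₂ := cycleSucc i₁
  have h₁ : (i₁ : ℕ) = 1 := val_cycleSucc_of_lt (by simp only [i₀]; omega)
  have h₂ : (i₂ : ℕ) = 2 := by rw [val_cycleSucc_of_lt] <;> omega
  have hne : ∀ {i j : Fin n}, (i : ℕ) ≠ j → cycleEdge hn i ≠ cycleEdge hn j :=
    fun h => (cycleEdge_injective hn).ne (Fin.ne_of_val_ne h)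
  refine length_le_deg_of_nodup (l := [.inl i₁, .inl i₂, .inr (cycleEdge hn i₀),
    .inr (cycleEdge hn i₂)]) (List.Nodup.of_map cyclePos ?_) ?_
  · simp only [List.map_cons, List.map_nil, cyclePos, edgeStart_cycleEdge, h₁, h₂, i₀]
    decide
  · simp only [List.mem_cons, List.mem_nil_iff, or_false, forall_eq_or_imp, forall_eq]
    exact ⟨Sym2.mem_mk_left _ _, Sym2.mem_mk_right _ _,
      ⟨rfl, hne (by simp [i₀, h₁]), i₁, Sym2.mem_mk_left _ _, Sym2.mem_mk_right _ _⟩,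
      ⟨rfl, hne (by omega), i₂, Sym2.mem_mk_right _ _, Sym2.mem_mk_left _ _⟩⟩

end Cycle

/-- For every `n ≥ 3`, the graphs `S(C_n)`, `R(C_n)`, `Q(C_n)` are
dispersable, with maximum degrees `2`, `4`, `4` respectively. -/
theorem SRQ_cycle_dispersable (n : ℕ) (hn : 3 ≤ n) :
    (mbt (FGraph .S (cycleG n)) = maxDeg (FGraph .S (cycleG n)) ∧
      maxDeg (FGraph .S (cycleG n)) = 2) ∧
    (mbt (FGraph .R (cycleG n)) = maxDeg (FGraph .R (cycleG n)) ∧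
      maxDeg (FGraph .R (cycleG n)) = 4) ∧
    (mbt (FGraph .Q (cycleG n)) = maxDeg (FGraph .Q (cycleG n)) ∧
      maxDeg (FGraph .Q (cycleG n)) = 4) :=
  ⟨((isMBE_evenCycle n).comap cyclePosHomS cyclePos_injective).mbt_eq_maxDeg (two_le_deg_S hn),
    ((isMBE_chordedCycle n (by norm_num)).comap (cyclePosHomChorded .R 0 (fun _ => rfl) (by decide))
      cyclePos_injective).mbt_eq_maxDeg (four_le_deg_R hn),
    ((isMBE_chordedCycle n (by norm_num)).comap (cyclePosHomChorded .Q 1 (by decide) (fun _ => rfl))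
      cyclePos_injective).mbt_eq_maxDeg (four_le_deg_Q hn)⟩
end

section
/- For every n ≥ 1, the graph Q(S_n) obtained from the star S_n = K_{1,n} is dispersable, with mbt(Q(S_n)) = Δ(Q(S_n)) = n + 1. -/
open SimpleGraph

/-!
Order the vertices of `Q(S_n)` as `0, e₁, 1, e₂, 2, …, eₙ, n`, where `eᵢ` is the edge `0i`, and
give both `i` and `eᵢ` the index `i`. Put the edge between vertices of indices `a` and `b` on
page `a + b mod (n + 1)`. The neighbours of any vertex have pairwise distinct indices, so no
vertex meets two edges of the same page. Two edges `uv`, `xy` on one page with `u < x < v < y`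
would need `index u = index x` and `index v = index y`, which forces `x` and `y` to be leaves of
the star, and leaves are not adjacent in `Q(S_n)`. Hence `n + 1` pages suffice, while every `eᵢ`
has degree `n + 1`: it is adjacent to `0`, to `i` and to the other `n - 1` edge vertices.
-/

open Set

section MatchingBookEmbedding

variable {V : Type*} {G : SimpleGraph V} {k : ℕ} {f : V → ℕ} {page : Sym2 V → ℕ}

theorem IsMBE.deg_le_s10 (h : IsMBE G k f page) (u : V) : deg G u ≤ k := by
  obtain ⟨-, hlt, -, hmatch⟩ := h
  calc deg G u ≤ (Iio k).ncard :=
        ncard_le_ncard_of_injOn (fun v => page s(u, v)) (fun v hv => hlt u v hv)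
          (fun v hv w hw hvw => by_contra fun hne => hmatch u v w hv hw hne hvw) (finite_Iio k)
    _ = k := ncard_Iio_nat k

theorem mbt_eq_of_isMBE (h : IsMBE G k f page) {u : V} (hu : k ≤ deg G u) : mbt G = k :=
  le_antisymm (Nat.sInf_le ⟨f, page, h⟩)
    (le_csInf ⟨k, f, page, h⟩ fun _ ⟨_, _, h'⟩ => hu.trans (h'.deg_le_s10 u))

theorem maxDeg_eq_of_isMBE [Fintype V] (h : IsMBE G k f page) {u : V} (hu : k ≤ deg G u) :
    maxDeg G = k :=
  le_antisymm (Finset.sup_le fun v _ => h.deg_le_s10 v) (hu.trans (Finset.le_sup (Finset.mem_univ u)))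

end MatchingBookEmbedding

namespace starG

variable {n : ℕ}

theorem adj_zero {i : Fin (n + 1)} (hi : i ≠ 0) : (starG n).Adj 0 i := ⟨hi.symm, Or.inl rfl⟩

/-- The leaf of an edge of the star, i.e. its endpoint other than the center `0`. -/
def leaf (e : (starG n).edgeSet) : Fin (n + 1) := (e : Sym2 (Fin (n + 1))).sup

theorem coe_edge_eq (e : (starG n).edgeSet) : (e : Sym2 (Fin (n + 1))) = s(0, leaf e) := by
  obtain ⟨e, he⟩ := e
  induction e using Sym2.ind with
  | _ a b =>
    change s(a, b) = s(0, s(a, b).sup)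
    obtain ⟨-, rfl | rfl⟩ := he
    · simp
    · simp [Sym2.eq_swap]

theorem leaf_ne_zero (e : (starG n).edgeSet) : leaf e ≠ 0 := by
  have he := e.2
  rw [coe_edge_eq e, mem_edgeSet] at he
  exact he.1.symm

@[simp] theorem leaf_mk {i : Fin (n + 1)} (hi : (starG n).Adj 0 i) :
    leaf ⟨s(0, i), hi⟩ = i := by
  simp [leaf]

theorem leaf_injective : Function.Injective (leaf (n := n)) := fun e f h =>
  Subtype.ext (by rw [coe_edge_eq e, coe_edge_eq f, h])

theorem mem_edge_iff {a : Fin (n + 1)} (e : (starG n).edgeSet) :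
    a ∈ (e : Sym2 (Fin (n + 1))) ↔ a = 0 ∨ a = leaf e := by
  rw [coe_edge_eq e, Sym2.mem_iff]

end starG

theorem Fin.eq_and_eq_of_add_eq_add {n : ℕ} {a b c d : Fin (n + 1)} (hab : a ≤ b)
    (hbc : b ≤ c) (hcd : c ≤ d) (h : a + c = b + d) : a = b ∧ c = d := by
  have hmod : (a : ℕ) + c ≡ b + d [MOD n + 1] := by
    rw [Fin.ext_iff, Fin.val_add, Fin.val_add] at h
    exact h
  have hd := d.isLt
  rw [Fin.le_iff_val_le_val] at hab hbc hcd
  have := hmod.eq_of_abs_lt (abs_lt.mpr ⟨by omega, by omega⟩)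
  omega

namespace QStar

open starG

variable {n : ℕ}

local notation "Γ" n:max => FGraph FOp.Q (starG n)

theorem not_adj_inl_inl (a b : Fin (n + 1)) : ¬ (Γ n).Adj (.inl a) (.inl b) :=
  fun h => Bool.false_ne_true h.1

theorem adj_inl_inr {a : Fin (n + 1)} {e : (starG n).edgeSet} :
    (Γ n).Adj (.inl a) (.inr e) ↔ a = 0 ∨ a = leaf e :=
  mem_edge_iff e

theorem adj_inr_inr {e f : (starG n).edgeSet} : (Γ n).Adj (.inr e) (.inr f) ↔ e ≠ f :=
  ⟨fun h => h.2.1,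
    fun h => ⟨rfl, h, 0, (mem_edge_iff e).2 (.inl rfl), (mem_edge_iff f).2 (.inl rfl)⟩⟩

def index : Fin (n + 1) ⊕ (starG n).edgeSet → Fin (n + 1) := Sum.elim id leaf

def position : Fin (n + 1) ⊕ (starG n).edgeSet → ℕ :=
  Sum.elim (fun v => 2 * v) (fun e => 2 * leaf e - 1)

def page : Sym2 (Fin (n + 1) ⊕ (starG n).edgeSet) → ℕ :=
  Sym2.lift ⟨fun x y => (index x + index y : Fin (n + 1)),
    fun x y => congrArg Fin.val (add_comm _ _)⟩

theorem index_injOn_neighborSet (u : Fin (n + 1) ⊕ (starG n).edgeSet) :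
    InjOn index ((Γ n).neighborSet u) := by
  have key : ∀ {a e}, (Γ n).Adj u (.inl a) → (Γ n).Adj u (.inr e) → a ≠ leaf e := by
    rintro a e hua hue rfl
    rcases u with b | f
    · exact not_adj_inl_inl b _ hua
    · rcases adj_inl_inr.1 hua.symm with h | h
      · exact leaf_ne_zero e h
      · exact adj_inr_inr.1 hue (leaf_injective h).symm
  rintro (a | e) hv (b | f) hw h
  · exact congrArg Sum.inl h
  · exact (key hv hw h).elim
  · exact (key hw hv h.symm).elim
  · exact congrArg Sum.inr (leaf_injective h)

theorem position_injective : Function.Injective (position (n := n)) := by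
  rintro (a | e) (b | f) h <;> simp only [position, Sum.elim_inl, Sum.elim_inr] at h
  · exact congrArg Sum.inl (Fin.ext (by omega))
  · have := Fin.pos_iff_ne_zero.2 (leaf_ne_zero f); omega
  · have := Fin.pos_iff_ne_zero.2 (leaf_ne_zero e); omega
  · have := Fin.pos_iff_ne_zero.2 (leaf_ne_zero e)
    have := Fin.pos_iff_ne_zero.2 (leaf_ne_zero f)
    exact congrArg Sum.inr (leaf_injective (Fin.ext (by omega)))

theorem index_le_of_position_lt {z w : Fin (n + 1) ⊕ (starG n).edgeSet}
    (h : position z < position w) : index z ≤ index w := by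
  rw [Fin.le_iff_val_le_val]
  rcases z with a | e <;> rcases w with b | f <;>
    simp only [position, index, Sum.elim_inl, Sum.elim_inr, id] at h ⊢ <;> omega

theorem exists_eq_inl_of_position_lt_of_index_eq {z w : Fin (n + 1) ⊕ (starG n).edgeSet}
    (h : position z < position w) (hzw : index z = index w) : ∃ b, w = .inl b := by
  rcases w with b | f
  · exact ⟨b, rfl⟩
  · rcases z with a | e <;> simp only [position, index, Sum.elim_inl, Sum.elim_inr, id] at h hzw
    · have := Fin.pos_iff_ne_zero.2 (leaf_ne_zero f)
      rw [hzw] at h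
      omega
    · rw [leaf_injective hzw] at h
      exact (lt_irrefl _ h).elim

theorem isMBE : IsMBE (Γ n) (n + 1) position page := by
  refine ⟨position_injective, fun _ _ _ => Fin.isLt _, ?_, ?_⟩
  · rintro u v x y - hxy hpage ⟨hux, hxv, hvy⟩
    obtain ⟨hu, hv⟩ := Fin.eq_and_eq_of_add_eq_add (index_le_of_position_lt hux)
      (index_le_of_position_lt hxv) (index_le_of_position_lt hvy) (Fin.ext hpage)
    obtain ⟨a, rfl⟩ := exists_eq_inl_of_position_lt_of_index_eq hux hu
    obtain ⟨b, rfl⟩ := exists_eq_inl_of_position_lt_of_index_eq hvy hv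
    exact not_adj_inl_inl a b hxy
  · intro u v w huv huw hvw hpage
    exact hvw (index_injOn_neighborSet u huv huw (add_left_cancel (Fin.ext hpage)))

theorem index_image_neighborSet_inr (e : (starG n).edgeSet) :
    index '' (Γ n).neighborSet (.inr e) = univ := by
  refine eq_univ_of_forall fun j => ?_
  by_cases hj : j = 0 ∨ j = leaf e
  · exact ⟨.inl j, adj_inl_inr.2 hj |>.symm, rfl⟩
  · obtain ⟨hj0, hje⟩ := not_or.1 hj
    refine ⟨.inr ⟨s(0, j), adj_zero hj0⟩, adj_inr_inr.2 fun h => hje ?_, leaf_mk _⟩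
    rw [h, leaf_mk]

theorem deg_inr (e : (starG n).edgeSet) : deg (Γ n) (.inr e) = n + 1 := by
  rw [deg, ← (index_injOn_neighborSet _).ncard_image, index_image_neighborSet_inr, ncard_univ,
    Nat.card_eq_fintype_card, Fintype.card_fin]

end QStar

/-- For every `n ≥ 1`, the graph `Q(S_n)` obtained from the star
`S_n = K_{1,n}` is dispersable, with `mbt(Q(S_n)) = Δ(Q(S_n)) = n + 1`. -/
theorem Q_star_dispersable (n : ℕ) (hn : 1 ≤ n) :
    mbt (FGraph .Q (starG n)) = maxDeg (FGraph .Q (starG n)) ∧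
      maxDeg (FGraph .Q (starG n)) = n + 1 := by
  have hleaf : (⟨1, by omega⟩ : Fin (n + 1)) ≠ 0 := Fin.ne_of_val_ne one_ne_zero
  have hdeg := (QStar.deg_inr ⟨s(0, _), starG.adj_zero hleaf⟩).ge
  rw [mbt_eq_of_isMBE QStar.isMBE hdeg, maxDeg_eq_of_isMBE QStar.isMBE hdeg]
  exact ⟨rfl, rfl⟩
end

section
/- Let F ∈ {S, R, Q, T}, let G be any finite simple graph, and let H be any finite dispersable bipartite graph (H is bipartite and mbt(H) = Δ(H)). Then mbt(G +_F H) ≤ mbt(F(G)) + Δ(H). -/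
open SimpleGraph

/-! `G +_F H` is a subgraph of the box product `F(G) □ H`, so it suffices to embed `A □ H`, for
finite `A` and bipartite `H`, on `mbt A + mbt H` pages. Lay out the copies `A × {w}` one after
another in the spine order of `H`, each in the spine order of `A`, reversed on one colour class of
`H`. Edges inside a copy keep their page in `A`; the edge `(x, w)(x, w')` gets the page of `ww'` in
`H`, shifted past the pages of `A`. Two such edges on a common page either project to distinct
edges of `H` on one page, which neither cross nor touch, or join the same two copies; these are
laid out in opposite orders, so the two edges are nested.
-/

namespace IsMBE

variable {V : Type*} {G G' : SimpleGraph V} {k : ℕ} {f : V → ℕ} {page : Sym2 V → ℕ}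

theorem mono (h : IsMBE G' k f page) (hle : G ≤ G') : IsMBE G k f page :=
  ⟨h.1, fun u v huv => h.2.1 u v (hle huv),
    fun u v x y huv hxy => h.2.2.1 u v x y (hle huv) (hle hxy),
    fun u v w huv huw => h.2.2.2 u v w (hle huv) (hle huw)⟩

theorem eq_of_page_eq (h : IsMBE G k f page) {u v w : V} (huv : G.Adj u v) (huw : G.Adj u w)
    (hp : page s(u, v) = page s(u, w)) : v = w :=
  by_contra fun hvw => h.2.2.2 u v w huv huw hvw hp

/-- Any equality in the chain would make two distinct edges on one page share a vertex. -/
theorem not_weakCross (h : IsMBE G k f page) {u v x y : V} (huv : G.Adj u v) (hxy : G.Adj x y)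
    (hp : page s(u, v) = page s(x, y)) (hne : s(u, v) ≠ s(x, y)) :
    ¬(f u ≤ f x ∧ f x ≤ f v ∧ f v ≤ f y) := by
  rintro ⟨hux, hxv, hvy⟩
  have hux' : u ≠ x := by
    rintro rfl
    exact hne (by rw [h.eq_of_page_eq huv hxy hp])
  have hxv' : x ≠ v := by
    rintro rfl
    have : u = y := h.eq_of_page_eq huv.symm hxy (by rwa [Sym2.eq_swap])
    exact hne (by rw [this, Sym2.eq_swap])
  have hvy' : v ≠ y := by
    rintro rfl
    have : u = x := h.eq_of_page_eq huv.symm hxy.symm (by rwa [Sym2.eq_swap, @Sym2.eq_swap _ v x])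
    exact hne (by rw [this])
  exact h.2.2.1 u v x y huv hxy hp ⟨hux.lt_of_ne (h.1.ne hux'), hxv.lt_of_ne (h.1.ne hxv'),
    hvy.lt_of_ne (h.1.ne hvy')⟩

end IsMBE

/-- One page per edge. -/
theorem exists_isMBE {V : Type*} [Finite V] (G : SimpleGraph V) :
    ∃ k f page, IsMBE G k f page := by
  obtain ⟨f, hf⟩ := Countable.exists_injective_nat V
  obtain ⟨p, hp⟩ := Countable.exists_injective_nat (Sym2 V)
  obtain ⟨B, hB⟩ := (Set.finite_range p).bddAbove
  refine ⟨B + 1, f, p, hf, fun u v _ => Nat.lt_succ_of_le (hB ⟨_, rfl⟩), ?_, ?_⟩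
  · rintro u v x y - - hpage ⟨h1, h2, h3⟩
    rcases Sym2.eq_iff.1 (hp hpage) with ⟨rfl, rfl⟩ | ⟨rfl, rfl⟩ <;> omega
  · exact fun u v w _ _ hvw hpage => hvw (Sym2.congr_right.1 (hp hpage))

theorem exists_isMBE_mbt {V : Type*} [Finite V] (G : SimpleGraph V) :
    ∃ f page, IsMBE G (mbt G) f page :=
  Nat.sInf_mem (exists_isMBE G)

theorem mbt_le_of_isMBE {V : Type*} {G : SimpleGraph V} {k : ℕ} {f : V → ℕ}
    {page : Sym2 V → ℕ} (h : IsMBE G k f page) : mbt G ≤ k :=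
  Nat.sInf_le ⟨f, page, h⟩

theorem mbt_mono {V : Type*} [Finite V] {G G' : SimpleGraph V} (hle : G ≤ G') :
    mbt G ≤ mbt G' :=
  let ⟨_, _, h⟩ := exists_isMBE_mbt G'
  mbt_le_of_isMBE (h.mono hle)

theorem mul_add_lt_mul_add_iff {N q q' r r' : ℕ} (hr : r ≤ N) (hr' : r' ≤ N) :
    q * (N + 1) + r < q' * (N + 1) + r' ↔ q < q' ∨ q = q' ∧ r < r' := by
  constructor
  · intro h
    rcases lt_trichotomy q q' with hq | rfl | hq
    · exact Or.inl hq
    · exact Or.inr ⟨rfl, by omega⟩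
    · nlinarith [Nat.mul_le_mul_right (N + 1) hq]
  · rintro (hq | ⟨rfl, h⟩)
    · nlinarith [Nat.mul_le_mul_right (N + 1) hq]
    · omega

theorem mul_add_eq_mul_add_iff {N q q' r r' : ℕ} (hr : r ≤ N) (hr' : r' ≤ N) :
    q * (N + 1) + r = q' * (N + 1) + r' ↔ q = q' ∧ r = r' := by
  refine ⟨fun h => ?_, by rintro ⟨rfl, rfl⟩; rfl⟩
  have h1 := (mul_add_lt_mul_add_iff hr hr').not.1 h.not_lt
  have h2 := (mul_add_lt_mul_add_iff hr' hr).not.1 h.symm.not_lt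
  omega

section BoxProduct

variable {X W : Type*} {A : SimpleGraph X} {H : SimpleGraph W}

def blockPos (fA : X → ℕ) (C : W → Bool) (N : ℕ) (a : X × W) : ℕ :=
  if C a.2 then N - fA a.1 else fA a.1

/-- With `N` bounding `fA`, the copies `X × {w}` are laid out in the order of `fH`, each as an
interval of length `N + 1` ordered by `fA`, reversed on the copies of colour `true`. -/
def boxPos (fA : X → ℕ) (fH : W → ℕ) (C : W → Bool) (N : ℕ) (a : X × W) : ℕ :=
  fH a.2 * (N + 1) + blockPos fA C N a

noncomputable def boxPage (k : ℕ) (pA : Sym2 X → ℕ) (pH : Sym2 W → ℕ) (e : Sym2 (X × W)) : ℕ :=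
  open Classical in
  if (e.map Prod.snd).IsDiag then pA (e.map Prod.fst) else k + pH (e.map Prod.snd)

theorem boxPage_of_eq {k : ℕ} {pA : Sym2 X → ℕ} {pH : Sym2 W → ℕ} {a b : X × W}
    (h : a.2 = b.2) : boxPage k pA pH s(a, b) = pA s(a.1, b.1) := by
  simp [boxPage, h]

theorem boxPage_of_ne {k : ℕ} {pA : Sym2 X → ℕ} {pH : Sym2 W → ℕ} {a b : X × W}
    (h : a.2 ≠ b.2) : boxPage k pA pH s(a, b) = k + pH s(a.2, b.2) := by
  simp [boxPage, h]

variable {fA : X → ℕ} {fH : W → ℕ} {C : W → Bool} {N : ℕ}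

theorem blockPos_le (hN : ∀ x, fA x ≤ N) (a : X × W) : blockPos fA C N a ≤ N := by
  unfold blockPos
  split <;> grind

theorem boxPos_lt_iff (hN : ∀ x, fA x ≤ N) {a b : X × W} :
    boxPos fA fH C N a < boxPos fA fH C N b ↔
      fH a.2 < fH b.2 ∨ fH a.2 = fH b.2 ∧ blockPos fA C N a < blockPos fA C N b :=
  mul_add_lt_mul_add_iff (blockPos_le hN a) (blockPos_le hN b)

theorem blockPos_lt_iff_of_ne (hN : ∀ x, fA x ≤ N) {x y : X} {w w' : W} (hC : C w ≠ C w') :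
    blockPos fA C N (x, w) < blockPos fA C N (y, w) ↔
      blockPos fA C N (y, w') < blockPos fA C N (x, w') := by
  have hx := hN x
  have hy := hN y
  clear hN
  unfold blockPos
  cases hw : C w <;> cases hw' : C w' <;> simp_all <;> omega

theorem boxPos_injective (hfA : Function.Injective fA) (hfH : Function.Injective fH)
    (hN : ∀ x, fA x ≤ N) : Function.Injective (boxPos fA fH C N) := by
  rintro ⟨x, w⟩ ⟨y, v⟩ h
  obtain ⟨hwv, hxy⟩ := (mul_add_eq_mul_add_iff (blockPos_le hN _) (blockPos_le hN _)).1 h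
  obtain rfl := hfH hwv
  have hx := hN x
  have hy := hN y
  unfold blockPos at hxy
  dsimp only at hxy
  rw [hfA (a₁ := x) (a₂ := y) (by split at hxy <;> omega)]

theorem fH_le_of_boxPos_lt (hN : ∀ x, fA x ≤ N) {a b : X × W}
    (h : boxPos fA fH C N a < boxPos fA fH C N b) : fH a.2 ≤ fH b.2 := by
  rcases (boxPos_lt_iff hN).1 h with h | ⟨h, -⟩ <;> omega

theorem blockPos_lt_of_boxPos_lt (hN : ∀ x, fA x ≤ N) {a b : X × W}
    (h : boxPos fA fH C N a < boxPos fA fH C N b) (hab : a.2 = b.2) :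
    blockPos fA C N a < blockPos fA C N b := by
  rcases (boxPos_lt_iff hN).1 h with h | ⟨-, h⟩
  · exact absurd h (by rw [hab]; exact lt_irrefl _)
  · exact h

variable {k d : ℕ} {pA : Sym2 X → ℕ} {pH : Sym2 W → ℕ}

theorem boxPos_not_cross_horizontal (hA : IsMBE A k fA pA) (hfH : Function.Injective fH)
    (hN : ∀ x, fA x ≤ N) {a b c e : X × W} (hab : A.Adj a.1 b.1) (hab2 : a.2 = b.2)
    (hce : A.Adj c.1 e.1) (hce2 : c.2 = e.2) (hp : pA s(a.1, b.1) = pA s(c.1, e.1)) :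
    ¬(boxPos fA fH C N a < boxPos fA fH C N c ∧ boxPos fA fH C N c < boxPos fA fH C N b ∧
      boxPos fA fH C N b < boxPos fA fH C N e) := by
  rintro ⟨h1, h2, h3⟩
  have hac : a.2 = c.2 :=
    hfH (le_antisymm (fH_le_of_boxPos_lt hN h1) (hab2 ▸ fH_le_of_boxPos_lt hN h2))
  obtain ⟨x, w⟩ := a
  obtain ⟨x', w'⟩ := b
  obtain ⟨y, v⟩ := c
  obtain ⟨y', v'⟩ := e
  dsimp only at *
  subst hab2 hac hce2
  have r1 := blockPos_lt_of_boxPos_lt hN h1 rfl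
  have r2 := blockPos_lt_of_boxPos_lt hN h2 rfl
  have r3 := blockPos_lt_of_boxPos_lt hN h3 rfl
  have := hN x
  have := hN x'
  have := hN y
  unfold blockPos at r1 r2 r3
  dsimp only at r1 r2 r3
  cases hw : C w <;> simp only [hw, Bool.false_eq_true, if_true, if_false] at r1 r2 r3
  · exact hA.2.2.1 _ _ _ _ hab hce hp ⟨r1, r2, r3⟩
  · exact hA.2.2.1 _ _ _ _ hce.symm hab.symm (by rw [Sym2.eq_swap, ← hp, Sym2.eq_swap])
      ⟨by omega, by omega, by omega⟩

theorem boxPos_not_cross_vertical (hH : IsMBE H d fH pH) (C : H.Coloring Bool)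
    (hN : ∀ x, fA x ≤ N) {a b c e : X × W} (hab : H.Adj a.2 b.2) (hab1 : a.1 = b.1)
    (hce : H.Adj c.2 e.2) (hce1 : c.1 = e.1) (hp : pH s(a.2, b.2) = pH s(c.2, e.2)) :
    ¬(boxPos fA fH C N a < boxPos fA fH C N c ∧ boxPos fA fH C N c < boxPos fA fH C N b ∧
      boxPos fA fH C N b < boxPos fA fH C N e) := by
  rintro ⟨h1, h2, h3⟩
  have hac := fH_le_of_boxPos_lt hN h1
  have hcb := fH_le_of_boxPos_lt hN h2
  have hbe := fH_le_of_boxPos_lt hN h3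
  by_cases he : s(a.2, b.2) = s(c.2, e.2)
  · rcases Sym2.eq_iff.1 he with ⟨hac', hbe'⟩ | ⟨hae, hbc⟩
    · obtain ⟨x, w⟩ := a
      obtain ⟨x', w'⟩ := b
      obtain ⟨y, v⟩ := c
      obtain ⟨y', v'⟩ := e
      dsimp only at *
      subst hab1 hce1 hac' hbe'
      -- adjacent copies are laid out in opposite orders, so the two edges are nested
      exact ((blockPos_lt_iff_of_ne hN (C.valid hab)).1 (blockPos_lt_of_boxPos_lt hN h1 rfl)).asymm
        (blockPos_lt_of_boxPos_lt hN h3 rfl)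
    · exact hab.ne (hH.1 (by rw [← hbc] at hac; rw [← hae] at hbe; omega))
  · exact hH.not_weakCross hab hce hp he ⟨hac, hcb, hbe⟩

theorem IsMBE.boxProd (hA : IsMBE A k fA pA) (hH : IsMBE H d fH pH) (C : H.Coloring Bool)
    (hN : ∀ x, fA x ≤ N) : IsMBE (A □ H) (k + d) (boxPos fA fH C N) (boxPage k pA pH) := by
  refine ⟨boxPos_injective hA.1 hH.1 hN, ?_, ?_, ?_⟩
  · rintro a b (⟨hab, h2⟩ | ⟨hab, -⟩)
    · rw [boxPage_of_eq h2]
      exact (hA.2.1 _ _ hab).trans_le (Nat.le_add_right k d)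
    · rw [boxPage_of_ne hab.ne]
      exact Nat.add_lt_add_left (hH.2.1 _ _ hab) k
  · rintro a b c e (⟨hab, hab2⟩ | ⟨hab, hab1⟩) (⟨hce, hce2⟩ | ⟨hce, hce1⟩) hp
    · rw [boxPage_of_eq hab2, boxPage_of_eq hce2] at hp
      exact boxPos_not_cross_horizontal hA hH.1 hN hab hab2 hce hce2 hp
    · rw [boxPage_of_eq hab2, boxPage_of_ne hce.ne] at hp
      exact absurd hp (by have := hA.2.1 _ _ hab; omega)
    · rw [boxPage_of_ne hab.ne, boxPage_of_eq hce2] at hp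
      exact absurd hp (by have := hA.2.1 _ _ hce; omega)
    · rw [boxPage_of_ne hab.ne, boxPage_of_ne hce.ne] at hp
      exact boxPos_not_cross_vertical hH C hN hab hab1 hce hce1 (Nat.add_left_cancel hp)
  · rintro a b c (⟨hab, hab2⟩ | ⟨hab, hab1⟩) (⟨hac, hac2⟩ | ⟨hac, hac1⟩) hbc hp
    · rw [boxPage_of_eq hab2, boxPage_of_eq hac2] at hp
      exact hbc (Prod.ext (hA.eq_of_page_eq hab hac hp) (hab2.symm.trans hac2))
    · rw [boxPage_of_eq hab2, boxPage_of_ne hac.ne] at hp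
      exact absurd hp (by have := hA.2.1 _ _ hab; omega)
    · rw [boxPage_of_ne hab.ne, boxPage_of_eq hac2] at hp
      exact absurd hp (by have := hA.2.1 _ _ hac; omega)
    · rw [boxPage_of_ne hab.ne, boxPage_of_ne hac.ne] at hp
      exact hbc (Prod.ext (hab1.symm.trans hac1) (hH.eq_of_page_eq hab hac (Nat.add_left_cancel hp)))

end BoxProduct

theorem mbt_boxProd_le {X W : Type*} [Finite X] [Finite W] (A : SimpleGraph X)
    {H : SimpleGraph W} (hbip : H.Colorable 2) : mbt (A □ H) ≤ mbt A + mbt H := by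
  obtain ⟨fA, pA, hA⟩ := exists_isMBE_mbt A
  obtain ⟨fH, pH, hH⟩ := exists_isMBE_mbt H
  obtain ⟨N, hN⟩ := (Set.finite_range fA).bddAbove
  exact mbt_le_of_isMBE
    (hA.boxProd hH (H.recolorOfEquiv finTwoEquiv hbip.some) fun x => hN ⟨x, rfl⟩)

theorem FSum_le_boxProd (F : FOp) {V W : Type*} (G : SimpleGraph V) (H : SimpleGraph W) :
    FSum F G H ≤ FGraph F G □ H := by
  rintro a b (⟨h1, -, hH⟩ | ⟨h2, hF⟩)
  · exact Or.inr ⟨hH, h1⟩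
  · exact Or.inl ⟨hF, h2⟩

theorem mbt_FSum_le_general (F : FOp) {V W : Type*} [Fintype V] [Fintype W]
    (G : SimpleGraph V) (H : SimpleGraph W)
    (hbip : H.Colorable 2) (hdisp : mbt H = maxDeg H) :
    mbt (FSum F G H) ≤ mbt (FGraph F G) + maxDeg H :=
  calc mbt (FSum F G H) ≤ mbt (FGraph F G □ H) := mbt_mono (FSum_le_boxProd F G H)
    _ ≤ mbt (FGraph F G) + mbt H := mbt_boxProd_le _ hbip
    _ = mbt (FGraph F G) + maxDeg H := by rw [hdisp]

/-- For every `F ∈ {S, R, Q, T}`, every finite simple graph `G`, and every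
finite dispersable bipartite graph `H`, `mbt(G +_F H) ≤ mbt(F(G)) + Δ(H)`. -/
theorem mbt_FSum_le (F : FOp) {V W : Type*} [Fintype V] [DecidableEq V] [Fintype W]
    (G : SimpleGraph V) [DecidableRel G.Adj] (H : SimpleGraph W)
    (hbip : H.Colorable 2) (hdisp : mbt H = maxDeg H) :
    mbt (FSum F G H) ≤ mbt (FGraph F G) + maxDeg H :=
  mbt_FSum_le_general F G H hbip hdisp
end
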